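/- arXiv:quant-ph/0308089 — 2 statements merged into one kernel-verified Lean document; each statement's English description precedes it below -/
import Mathlib

section
/- Let N ≥ 1 and k ≥ 1. Suppose Φ : Matrix (Fin N) (Fin N) ℂ → Matrix (Fin N) (Fin N) ℂ is completely positive and has the representation Φ(ρ) = ∑_{j=1}^k β_j • (A_j * ρ * A_jᴴ), where A_1, …, A_k are N×N complex matrices forming a linearly independent family and each β_j is a real number. Then β_j ≥ 0 for every j ∈ {1, …, k}. -/
/-! The Choi matrix of `Φ`, i.e. `id ⊗ Φ` applied to the (unnormalized) maximally entangled
projector `vec 1 (vec 1)ᴴ`, is positive semidefinite by complete positivity, and for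
`Φ ρ = ∑ β_j A_j ρ A_jᴴ` it equals `∑ β_j vec A_j (vec A_j)ᴴ`. Since the vectors `vec A_j` are
linearly independent, some `w` pairs nontrivially with `vec A_j` and trivially with all other
`vec A_i`; the quadratic form of the Choi matrix at `w̄` is then `β_j |w ⬝ vec A_j|² ≥ 0`. -/

open scoped ComplexOrder Matrix

/-- `Φ` is completely positive: for every `m ≥ 1`, the map `id_m ⊗ Φ` (acting blockwise on
`m × m` block matrices with `N × N` blocks) maps positive semidefinite matrices to positive
semidefinite matrices. -/
def CompletelyPositive {N : ℕ}
    (Φ : Matrix (Fin N) (Fin N) ℂ → Matrix (Fin N) (Fin N) ℂ) : Prop :=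
  ∀ m : ℕ, 1 ≤ m → ∀ M : Matrix (Fin m × Fin N) (Fin m × Fin N) ℂ, M.PosSemidef →
    (Matrix.of fun p q : Fin m × Fin N =>
      Φ (Matrix.of fun a b : Fin N => M (p.1, a) (q.1, b)) p.2 q.2).PosSemidef

open Matrix

theorem LinearIndependent.exists_dotProduct_ne_zero_and_eq_zero {ι n K : Type*} [Fintype n]
    [Field K] {u : ι → n → K} (hu : LinearIndependent K u) (j : ι) :
    ∃ w : n → K, w ⬝ᵥ u j ≠ 0 ∧ ∀ i ≠ j, w ⬝ᵥ u i = 0 := by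
  classical
  obtain ⟨f, hfj, hf⟩ := Submodule.exists_dual_map_eq_bot_of_notMem
    (hu.notMem_span_image (s := {j}ᶜ) (x := j) (by simp)) inferInstance
  have hf_eq (x : n → K) : f x = (dotProductEquiv K n).symm f ⬝ᵥ x := by
    conv_lhs => rw [← (dotProductEquiv K n).apply_symm_apply f]
    rfl
  refine ⟨(dotProductEquiv K n).symm f, by rwa [← hf_eq], fun i hi => ?_⟩
  rw [← hf_eq, ← Submodule.mem_bot K, ← hf]
  exact Submodule.mem_map_of_mem (Submodule.subset_span ⟨i, hi, rfl⟩)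

theorem LinearIndependent.vec {ι m n R : Type*} [Ring R] {A : ι → Matrix m n R}
    (hA : LinearIndependent R A) : LinearIndependent R fun i => (A i).vec :=
  hA.map' ⟨⟨Matrix.vec, vec_add⟩, vec_smul⟩ (LinearMap.ker_eq_bot_of_injective vec_bijective.1)

theorem nonneg_of_posSemidef_sum_smul_vecMulVec {ι n 𝕜 : Type*} [Fintype ι] [Fintype n]
    [RCLike 𝕜] {u : ι → n → 𝕜} (hu : LinearIndependent 𝕜 u) (β : ι → ℝ)
    (hpos : (∑ i, β i • vecMulVec (u i) (star (u i))).PosSemidef) (j : ι) : 0 ≤ β j := by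
  obtain ⟨w, hwj, hw⟩ := hu.exists_dotProduct_ne_zero_and_eq_zero j
  have hquad : star (star w) ⬝ᵥ (∑ i, β i • vecMulVec (u i) (star (u i))) *ᵥ star w
      = ∑ i, ((β i * ‖w ⬝ᵥ u i‖ ^ 2 : ℝ) : 𝕜) := by
    simp only [star_star, sum_mulVec, dotProduct_sum, smul_mulVec, vecMulVec_mulVec,
      star_dotProduct_star, dotProduct_smul]
    refine Finset.sum_congr rfl fun i _ => ?_
    simp [RCLike.mul_conj, dotProduct_comm w, RCLike.real_smul_eq_coe_mul]
  have hnonneg := hpos.dotProduct_mulVec_nonneg (star w)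
  rw [hquad, Finset.sum_eq_single j (fun i _ hi => by simp [hw i hi]) (by simp),
    RCLike.ofReal_nonneg] at hnonneg
  exact nonneg_of_mul_nonneg_left hnonneg (by positivity)

def choiMatrix {n R : Type*} [DecidableEq n] [Zero R] [One R] (Φ : Matrix n n R → Matrix n n R) :
    Matrix (n × n) (n × n) R :=
  of fun p q => Φ (single p.1 q.1 1) p.2 q.2

theorem choiMatrix_sum_smul_mul_mul_conjTranspose {ι n 𝕜 : Type*} [Fintype ι] [Fintype n]
    [DecidableEq n] [RCLike 𝕜] (A : ι → Matrix n n 𝕜) (β : ι → ℝ) :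
    choiMatrix (fun ρ => ∑ i, β i • (A i * ρ * (A i)ᴴ)) =
      ∑ i, β i • vecMulVec (A i).vec (star (A i).vec) := by
  ext p q
  simp [choiMatrix, Matrix.sum_apply, vecMulVec_apply, Matrix.mul_apply, single, vec, ite_and]

theorem CompletelyPositive.posSemidef_choiMatrix {N : ℕ}
    {Φ : Matrix (Fin N) (Fin N) ℂ → Matrix (Fin N) (Fin N) ℂ} (hΦ : CompletelyPositive Φ) :
    (choiMatrix Φ).PosSemidef := by
  rcases Nat.eq_zero_or_pos N with rfl | hN
  · exact Subsingleton.elim (choiMatrix Φ) 0 ▸ PosSemidef.zero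
  set Ω := vec (1 : Matrix (Fin N) (Fin N) ℂ)
  have hblock (i j : Fin N) :
      (of fun a b => vecMulVec Ω (star Ω) (i, a) (j, b)) = single i j 1 := by
    ext a b
    simp only [Ω, of_apply, vecMulVec_apply, Pi.star_apply, vec, one_apply, single]
    split_ifs <;> simp_all
  simpa only [choiMatrix, hblock] using hΦ N hN _ (posSemidef_vecMulVec_self_star Ω)

theorem stmt_1_general (N k : ℕ)
    (A : Fin k → Matrix (Fin N) (Fin N) ℂ) (hA : LinearIndependent ℂ A)
    (β : Fin k → ℝ)
    (Φ : Matrix (Fin N) (Fin N) ℂ → Matrix (Fin N) (Fin N) ℂ)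
    (hΦ : ∀ ρ, Φ ρ = ∑ j, β j • (A j * ρ * (A j)ᴴ))
    (hCP : CompletelyPositive Φ) :
    ∀ j, 0 ≤ β j := by
  have hchoi := hCP.posSemidef_choiMatrix
  rw [funext hΦ, choiMatrix_sum_smul_mul_mul_conjTranspose] at hchoi
  exact nonneg_of_posSemidef_sum_smul_vecMulVec hA.vec β hchoi

theorem stmt_1 (N k : ℕ) (hN : 1 ≤ N) (hk : 1 ≤ k)
    (A : Fin k → Matrix (Fin N) (Fin N) ℂ) (hA : LinearIndependent ℂ A)
    (β : Fin k → ℝ)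
    (Φ : Matrix (Fin N) (Fin N) ℂ → Matrix (Fin N) (Fin N) ℂ)
    (hΦ : ∀ ρ, Φ ρ = ∑ j, β j • (A j * ρ * (A j)ᴴ))
    (hCP : CompletelyPositive Φ) :
    ∀ j, 0 ≤ β j :=
  stmt_1_general N k A hA β Φ hΦ hCP
end

section
/- Let n ≥ 1 and let d : (Fin 4)^n → ℝ with d(0,0,…,0) = 1. Let Φ_D be the unique linear map on 2^n × 2^n complex matrices satisfying Φ_D(Σ_v) = d(v) • Σ_v for every v ∈ (Fin 4)^n. For w ∈ (Fin 4)^n set β_w = 4^{−n} ∑_{v ∈ (Fin 4)^n} (∏_{k=1}^n c(w_k, v_k)) d(v). Then for every 2^n × 2^n complex matrix ρ, Φ_D(ρ) = ∑_{w ∈ (Fin 4)^n} β_w • (Σ_w * ρ * Σ_w); i.e., Φ_D has an operator-sum decomposition with operator elements proportional to the tensor-product Pauli matrices. -/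
open scoped Matrix

/-- The Pauli matrices `σ_0, σ_1, σ_2, σ_3`. -/
def pauli : Fin 4 → Matrix (Fin 2) (Fin 2) ℂ :=
  ![!![1, 0; 0, 1], !![0, 1; 1, 0], !![0, -Complex.I; Complex.I, 0], !![1, 0; 0, -1]]

/-- The `n`-fold Kronecker product `σ_{v 1} ⊗ ⋯ ⊗ σ_{v n}`, realized as a matrix indexed by
`Fin n → Fin 2` (which is canonically identified with `Fin (2 ^ n)`). -/
def pauliTensor {n : ℕ} (v : Fin n → Fin 4) : Matrix (Fin n → Fin 2) (Fin n → Fin 2) ℂ :=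
  Matrix.of fun x y => ∏ k, pauli (v k) (x k) (y k)

/-- `c i j = 1` if `i = 0`, `j = 0` or `i = j`, and `c i j = -1` otherwise. -/
def pauliSign (i j : Fin 4) : ℝ :=
  if i = 0 ∨ j = 0 ∨ i = j then 1 else -1

/-!
Conjugation by `Σ_w` acts diagonally on the Pauli basis, `Σ_w Σ_v Σ_w = (∏ k, c(w k, v k)) Σ_v`,
because two single-qubit Pauli matrices either commute or anticommute. Hence both sides of the
identity are linear maps that are diagonal on the spanning family `Σ_v`, and it remains to compare
eigenvalues: `∑_w β_w ∏ k, c(w k, v k) = d v` follows from the orthogonality of the sign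
characters, `∑_w ∏ k, c(w k, u k) c(w k, v k) = 4 ^ n` if `u = v` and `0` otherwise.
-/

open Matrix

namespace Matrix

variable {ι m R : Type*} [Fintype ι] [CommSemiring R]

def piKron (A : ι → Matrix m m R) : Matrix (ι → m) (ι → m) R :=
  of fun x y => ∏ k, A k (x k) (y k)

lemma piKron_mul [DecidableEq ι] [Fintype m] (A B : ι → Matrix m m R) :
    piKron A * piKron B = piKron fun k => A k * B k := by
  ext x y
  simp only [piKron, mul_apply, of_apply, Fintype.prod_sum, Finset.prod_mul_distrib]

lemma piKron_smul (c : ι → R) (A : ι → Matrix m m R) :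
    piKron (fun k => c k • A k) = (∏ k, c k) • piKron A := by
  ext x y
  simp only [piKron, of_apply, smul_apply, smul_eq_mul, Finset.prod_mul_distrib]

lemma piKron_sum [DecidableEq ι] {κ : Type*} [Fintype κ] (A : ι → κ → Matrix m m R) :
    piKron (fun k => ∑ i, A k i) = ∑ v : ι → κ, piKron fun k => A k (v k) := by
  ext x y
  simp only [piKron, of_apply, sum_apply, Fintype.prod_sum]

lemma piKron_single [DecidableEq ι] [DecidableEq m] (x y : ι → m) :
    piKron (fun k => single (x k) (y k) (1 : R)) = single x y 1 := by
  ext p q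
  simp only [piKron, of_apply, single_apply, Fintype.prod_ite_zero, Finset.prod_const_one,
    forall_and, ← funext_iff]

lemma span_eq_top_of_single_mem {n : Type*} [Fintype m] [Fintype n] [DecidableEq m]
    [DecidableEq n] {S : Set (Matrix m n R)} (h : ∀ i j, single i j 1 ∈ Submodule.span R S) :
    Submodule.span R S = ⊤ := by
  rw [eq_top_iff, ← (stdBasis R m n).span_eq, Submodule.span_le]
  rintro _ ⟨⟨i, j⟩, rfl⟩
  rw [stdBasis_eq_single]
  exact h i j

lemma span_range_piKron [DecidableEq ι] [Fintype m] [DecidableEq m] {κ : Type*} [Fintype κ]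
    {P : κ → Matrix m m R} (hP : Submodule.span R (Set.range P) = ⊤) :
    Submodule.span R (Set.range fun v : ι → κ => piKron fun k => P (v k)) = ⊤ := by
  refine span_eq_top_of_single_mem fun x y => ?_
  choose c hc using fun a b => (Submodule.mem_span_range_iff_exists_fun R).1
    (hP ▸ Submodule.mem_top : single a b (1 : R) ∈ Submodule.span R (Set.range P))
  simp only [← piKron_single, ← hc, piKron_sum, piKron_smul]
  exact Submodule.sum_mem _ fun v _ => Submodule.smul_mem _ _ (Submodule.subset_span ⟨v, rfl⟩)

end Matrix

lemma pauliTensor_eq_piKron {n : ℕ} (v : Fin n → Fin 4) :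
    pauliTensor v = piKron fun k => pauli (v k) := rfl

lemma pauli_mul_pauli_mul_pauli (i j : Fin 4) :
    pauli i * pauli j * pauli i = (pauliSign i j : ℂ) • pauli j := by
  fin_cases i <;> fin_cases j <;>
    · ext a b
      fin_cases a <;> fin_cases b <;>
        simp [pauli, pauliSign, mul_apply, Fin.sum_univ_two]

lemma span_range_pauli : Submodule.span ℂ (Set.range pauli) = ⊤ := by
  refine span_eq_top_of_single_mem fun a b => (Submodule.mem_span_range_iff_exists_fun ℂ).2 ?_
  fin_cases a <;> fin_cases b <;>
    [use ![1/2, 0, 0, 1/2]; use ![0, 1/2, Complex.I/2, 0]; use ![0, 1/2, -Complex.I/2, 0];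
      use ![1/2, 0, 0, -1/2]] <;>
    ext i j <;> fin_cases i <;> fin_cases j <;>
      norm_num [pauli, Fin.sum_univ_four, Complex.ext_iff, cons_val_two, cons_val_three]

lemma span_range_pauliTensor (n : ℕ) :
    Submodule.span ℂ (Set.range (pauliTensor (n := n))) = ⊤ :=
  span_range_piKron span_range_pauli

lemma pauliTensor_mul_pauliTensor_mul_pauliTensor {n : ℕ} (w v : Fin n → Fin 4) :
    pauliTensor w * pauliTensor v * pauliTensor w =
      (∏ k, pauliSign (w k) (v k)) • pauliTensor v := by
  simp only [pauliTensor_eq_piKron, piKron_mul, pauli_mul_pauli_mul_pauli]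
  rw [piKron_smul, ← Complex.ofReal_prod, Complex.coe_smul]

lemma sum_pauliSign_mul_pauliSign (a b : Fin 4) :
    ∑ i, pauliSign i a * pauliSign i b = if a = b then 4 else 0 := by
  fin_cases a <;> fin_cases b <;> norm_num +decide [pauliSign, Fin.sum_univ_four]

lemma sum_prod_pauliSign_mul_pauliSign {n : ℕ} (u v : Fin n → Fin 4) :
    ∑ w : Fin n → Fin 4, ∏ k, pauliSign (w k) (u k) * pauliSign (w k) (v k) =
      if u = v then 4 ^ n else 0 := by
  simp only [← Fintype.prod_sum (fun k i => pauliSign i (u k) * pauliSign i (v k)),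
    sum_pauliSign_mul_pauliSign, Fintype.prod_ite_zero, Finset.prod_const, Finset.card_univ,
    Fintype.card_fin, ← funext_iff]

/-- The coefficient `β_w` of the operator-sum decomposition. -/
noncomputable def pauliCoeff {n : ℕ} (d : (Fin n → Fin 4) → ℝ) (w : Fin n → Fin 4) : ℝ :=
  (∑ v : Fin n → Fin 4, (∏ k, pauliSign (w k) (v k)) * d v) / 4 ^ n

lemma sum_pauliCoeff_mul_prod_pauliSign {n : ℕ} (d : (Fin n → Fin 4) → ℝ) (v : Fin n → Fin 4) :
    ∑ w, pauliCoeff d w * ∏ k, pauliSign (w k) (v k) = d v := by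
  calc ∑ w, pauliCoeff d w * ∏ k, pauliSign (w k) (v k)
      = (∑ u, (∑ w : Fin n → Fin 4, ∏ k, pauliSign (w k) (u k) * pauliSign (w k) (v k)) * d u)
          / 4 ^ n := by
        simp only [pauliCoeff, div_mul_eq_mul_div, ← Finset.sum_div, Finset.sum_mul,
          Finset.prod_mul_distrib]
        rw [Finset.sum_comm]
        congr! 3 with u - w
        ring
    _ = d v := by
        simp [sum_prod_pauliSign_mul_pauliSign]

theorem stmt_8_general (n : ℕ)
    (d : (Fin n → Fin 4) → ℝ)
    (Φ : Matrix (Fin n → Fin 2) (Fin n → Fin 2) ℂ →ₗ[ℂ]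
         Matrix (Fin n → Fin 2) (Fin n → Fin 2) ℂ)
    (hΦ : ∀ v : Fin n → Fin 4, Φ (pauliTensor v) = d v • pauliTensor v) :
    ∀ ρ : Matrix (Fin n → Fin 2) (Fin n → Fin 2) ℂ,
      Φ ρ = ∑ w : Fin n → Fin 4,
        ((∑ v : Fin n → Fin 4, (∏ k, pauliSign (w k) (v k)) * d v) / 4 ^ n) •
          (pauliTensor w * ρ * pauliTensor w) := by
  have hΦ_eq : Φ = ∑ w, pauliCoeff d w •
      (LinearMap.mulRight ℂ (pauliTensor w) ∘ₗ LinearMap.mulLeft ℂ (pauliTensor w)) := by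
    refine LinearMap.ext_on (span_range_pauliTensor n) ?_
    rintro _ ⟨v, rfl⟩
    simp only [hΦ, LinearMap.sum_apply, LinearMap.smul_apply, LinearMap.comp_apply,
      LinearMap.mulLeft_apply, LinearMap.mulRight_apply,
      pauliTensor_mul_pauliTensor_mul_pauliTensor, smul_smul, ← Finset.sum_smul,
      sum_pauliCoeff_mul_prod_pauliSign]
  intro ρ
  simp only [hΦ_eq, LinearMap.sum_apply, LinearMap.smul_apply, LinearMap.comp_apply,
    LinearMap.mulLeft_apply, LinearMap.mulRight_apply, pauliCoeff]

theorem stmt_8 (n : ℕ) (hn : 1 ≤ n)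
    (d : (Fin n → Fin 4) → ℝ) (hd : d (fun _ => 0) = 1)
    (Φ : Matrix (Fin n → Fin 2) (Fin n → Fin 2) ℂ →ₗ[ℂ]
         Matrix (Fin n → Fin 2) (Fin n → Fin 2) ℂ)
    (hΦ : ∀ v : Fin n → Fin 4, Φ (pauliTensor v) = d v • pauliTensor v) :
    ∀ ρ : Matrix (Fin n → Fin 2) (Fin n → Fin 2) ℂ,
      Φ ρ = ∑ w : Fin n → Fin 4,
        ((∑ v : Fin n → Fin 4, (∏ k, pauliSign (w k) (v k)) * d v) / 4 ^ n) •
          (pauliTensor w * ρ * pauliTensor w) :=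
  stmt_8_general n d Φ hΦ
end
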